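/- arXiv:1708.02064 — 2 statements merged into one kernel-verified Lean document; each statement's English description precedes it below -/
import Mathlib

section
/- Let n be a positive integer and λ an infinite cardinal, and let τ be a d-feebly compact shift-continuous T₁ topology on I_λ^n. Then the set of elements of rank exactly n, I_λ^n \ I_λ^{n-1}, is dense in (I_λ^n, τ). -/
open Set Topology

universe v

namespace ISemi

/-- The set of partial injective transformations (partial bijections) of `ι`
with rank (cardinality of the range, equivalently of the domain) at most `n`. -/
def Elem (ι : Type*) (n : ℕ) : Type _ :=
  {f : ι ≃. ι // {a : ι | (f a).isSome}.encard ≤ (n : ℕ∞)}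

variable {ι : Type*} {n : ℕ}

/-- Composition of partial bijections (written multiplicatively). -/
instance : Semigroup (Elem ι n) where
  mul f g := ⟨f.1.trans g.1, by
    refine le_trans (Set.encard_mono ?_) f.2
    intro a ha
    simp only [Set.mem_setOf_eq] at *
    rcases Option.isSome_iff_exists.1 ha with ⟨c, hc⟩
    rcases (PEquiv.trans_eq_some _ _ _ _).1 hc with ⟨b, hb, -⟩
    simp [hb]⟩
  mul_assoc f g h := Subtype.ext (PEquiv.trans_assoc f.1 g.1 h.1)

/-- The inverse partial bijection. -/
def inv (f : Elem ι n) : Elem ι n := ⟨f.1.symm, by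
  have key : ∀ (g : ι ≃. ι), {b : ι | (g.symm b).isSome} ⊆
      (fun p : {a : ι | (g a).isSome} => (g p.1).get p.2) '' Set.univ := by
    intro g b hb
    rcases Option.isSome_iff_exists.1 hb with ⟨a, ha⟩
    have ha' : b ∈ g a := (PEquiv.mem_iff_mem g).1 (Option.mem_def.2 ha)
    simp only [Option.mem_def] at ha'
    refine ⟨⟨a, ?_⟩, Set.mem_univ _, ?_⟩
    · simp [Set.mem_setOf_eq, ha']
    · simp [ha']
  calc {b : ι | (f.1.symm b).isSome}.encard
      ≤ ((fun p : {a : ι | (f.1 a).isSome} => (f.1 p.1).get p.2) '' Set.univ).encard :=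
        Set.encard_mono (key f.1)
    _ ≤ (Set.univ : Set {a : ι | (f.1 a).isSome}).encard := Set.encard_image_le _ _
    _ = {a : ι | (f.1 a).isSome}.encard := by rw [Set.encard_univ, ENat.card_coe_set_eq]
    _ ≤ (n : ℕ∞) := f.2⟩

/-- The zero (the empty partial map). -/
def zero (ι : Type*) (n : ℕ) : Elem ι n := ⟨⊥, by simp [PEquiv.bot_apply]⟩

/-- idempotents -/
def IsIdem (e : Elem ι n) : Prop := e * e = e

/-- The natural partial order on the inverse semigroup `Elem ι n`:
`f ≼ g` iff `f = e * g` for some idempotent `e`. -/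
def nle (f g : Elem ι n) : Prop := ∃ e : Elem ι n, IsIdem e ∧ f = e * g

/-- up-set of `f` w.r.t. the natural partial order -/
def upset (f : Elem ι n) : Set (Elem ι n) := {g | nle f g}

/-- the rank of a partial bijection: the cardinality of its domain (= range) -/
noncomputable def rank (f : Elem ι n) : ℕ∞ := {a : ι | (f.1 a).isSome}.encard

def dom (f : Elem ι n) : Set ι := {a : ι | (f.1 a).isSome}

def ran (f : Elem ι n) : Set ι := {b : ι | (f.1.symm b).isSome}

/-- A topology on `Elem ι n` is shift-continuous if all left and right
translations are continuous. -/
def ShiftContinuous (ι : Type*) (n : ℕ) [TopologicalSpace (Elem ι n)] : Prop :=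
  ∀ a : Elem ι n, Continuous (fun x : Elem ι n => a * x) ∧
    Continuous (fun x : Elem ι n => x * a)

/-- A space is feebly compact if every locally finite family of nonempty open
sets is finite. -/
def FeeblyCompact (X : Type*) [TopologicalSpace X] : Prop :=
  ∀ 𝒰 : Set (Set X), (∀ U ∈ 𝒰, IsOpen U ∧ U.Nonempty) →
    LocallyFinite (fun U : 𝒰 => (U : Set X)) → 𝒰.Finite

/-- A space is `d`-feebly compact if every discrete family of open sets is
finite; a family is discrete if every point has a neighbourhood meeting at
most one member of the family. -/
def DFeeblyCompact (X : Type*) [TopologicalSpace X] : Prop :=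
  ∀ 𝒰 : Set (Set X), (∀ U ∈ 𝒰, IsOpen U) →
    (∀ x : X, ∃ V ∈ 𝓝 x, {U ∈ 𝒰 | (U ∩ V).Nonempty}.Subsingleton) → 𝒰.Finite

/-- countably pracompact: there is a dense set `A` such that every infinite
subset of `A` has an accumulation point in `X`. -/
def CountablyPracompact (X : Type*) [TopologicalSpace X] : Prop :=
  ∃ A : Set X, Dense A ∧ ∀ B ⊆ A, B.Infinite → ∃ x : X, AccPt x (Filter.principal B)

/-- H-closed: closed in every Hausdorff space in which it embeds. -/
def HClosed (X : Type*) [TopologicalSpace X] : Prop :=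
  ∀ (Y : Type v) (_ : TopologicalSpace Y), T2Space Y →
    ∀ e : X → Y, IsEmbedding e → IsClosed (Set.range e)

/-- infra H-closed: every continuous image in a first-countable Hausdorff
space is closed. -/
def InfraHClosed (X : Type*) [TopologicalSpace X] : Prop :=
  ∀ (Y : Type v) (_ : TopologicalSpace Y), T2Space Y →
    FirstCountableTopology Y → ∀ f : X → Y, Continuous f → IsClosed (Set.range f)

/-- `Y`-compactness: every continuous image in `Y` is compact. -/
def YCompact (X : Type*) [TopologicalSpace X] (Y : Type*) [TopologicalSpace Y] : Prop :=
  ∀ f : X → Y, Continuous f → IsCompact (Set.range f)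

/-- scattered: every nonempty subset has a point isolated in it. -/
def Scattered (X : Type*) [TopologicalSpace X] : Prop :=
  ∀ S : Set X, S.Nonempty → ∃ x ∈ S, ∃ U : Set X, IsOpen U ∧ U ∩ S = {x}

/-- semiregular: there is a base consisting of regular open sets. -/
def Semiregular (X : Type*) [TopologicalSpace X] : Prop :=
  ∃ B : Set (Set X), TopologicalSpace.IsTopologicalBasis B ∧
    ∀ U ∈ B, interior (closure U) = U

/-- countably compact: every countable open cover has a finite subcover. -/
def CountablyCompact (X : Type*) [TopologicalSpace X] : Prop :=
  ∀ 𝒰 : Set (Set X), 𝒰.Countable → (∀ U ∈ 𝒰, IsOpen U) → ⋃₀ 𝒰 = Set.univ →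
    ∃ 𝒱 ⊆ 𝒰, 𝒱.Finite ∧ ⋃₀ 𝒱 = Set.univ

end ISemi

/-!
Every `f` has a neighbourhood consisting of extensions of `f`: the map
`x ↦ (f f⁻¹) x (f⁻¹ f)`, restricting `x` to a partial map from `dom f` to `ran f`, is continuous
by shift-continuity and has finite range, so in a T₁ space its fibre over `f` is open. In
particular elements of rank `n` are isolated. If an open set `U` contained none of them, pick
`f ∈ U` of rank `m < n` and extend `f` by the identity on infinitely many pairwise disjoint
`(n - m)`-sets outside `dom f ∪ ran f`. A common restriction of two of these extensions is a
restriction of `f`, which makes the resulting isolated points a discrete family; being infinite,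
it contradicts d-feeble compactness.
-/

open Function

theorem Continuous.isOpen_preimage_singleton_of_finite_range {X Y : Type*} [TopologicalSpace X]
    [TopologicalSpace Y] [T1Space Y] {φ : X → Y} (hφ : Continuous φ)
    (hfin : (Set.range φ).Finite) (y : Y) : IsOpen (φ ⁻¹' {y}) := by
  have : φ ⁻¹' {y} = φ ⁻¹' (Set.range φ \ {y})ᶜ := by
    ext x
    simp
  rw [this]
  exact hfin.sdiff.isClosed.isOpen_compl.preimage hφ

theorem Set.Infinite.exists_pairwise_disjoint_encard_eq {α : Type*} {S : Set α}
    (hS : S.Infinite) (q : ℕ) :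
    ∃ B : ℕ → Set α, Pairwise (Disjoint on B) ∧ ∀ k, B k ⊆ S ∧ (B k).encard = q := by
  let e : ℕ ↪ S := hS.natEmbedding
  have he : Injective fun m => (e m : α) := Subtype.val_injective.comp e.injective
  refine ⟨fun k => (fun i => (e (Nat.pair k i) : α)) '' {i | i < q}, ?_, fun k => ⟨?_, ?_⟩⟩
  · intro k j hkj
    refine Set.disjoint_left.2 ?_
    rintro _ ⟨i, -, rfl⟩ ⟨i', -, h⟩
    exact hkj (Nat.pair_eq_pair.1 (he h)).1.symm
  · rintro _ ⟨i, -, rfl⟩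
    exact (e _).2
  · have hpair : Injective (Nat.pair k) := fun i i' h => (Nat.pair_eq_pair.1 h).2
    exact ((he.comp hpair).encard_image _).trans (Nat.encard_range q)

namespace PEquiv

variable {α β : Type*}

theorem finite_setOf_forall_mem_imp {s : Set α} {t : Set β} (hs : s.Finite) (ht : t.Finite) :
    {g : α ≃. β | ∀ a b, b ∈ g a → a ∈ s ∧ b ∈ t}.Finite := by
  let graph : (α ≃. β) → Set (α × β) := fun g => {p | p.2 ∈ g p.1}
  have hgraph : Injective graph := fun g g' h =>
    PEquiv.ext fun a => Option.ext fun b => Set.ext_iff.1 h (a, b)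
  refine ((hs.prod ht).finite_subsets.preimage hgraph.injOn).subset ?_
  rintro g hg ⟨a, b⟩ hab
  exact hg a b hab

def extendRefl (f : α ≃. α) (s : Set α) [DecidablePred (· ∈ s)] (hdom : ∀ a ∈ s, f a = none)
    (hran : ∀ a ∈ s, f.symm a = none) : α ≃. α where
  toFun a := if a ∈ s then some a else f a
  invFun b := if b ∈ s then some b else f.symm b
  inv a b := by
    by_cases ha : a ∈ s <;> by_cases hb : b ∈ s
    · simp [ha, hb, eq_comm]
    · simp only [ha, hb, if_true, if_false, Option.some.injEq]
      refine ⟨fun h => ?_, fun h => absurd (h ▸ ha) hb⟩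
      exact absurd (hdom a ha) (by simp [f.eq_some_iff.1 h])
    · simp only [ha, hb, if_true, if_false, Option.some.injEq]
      refine ⟨fun h => absurd (h ▸ hb) ha, fun h => ?_⟩
      exact absurd (hran b hb) (by simp [f.eq_some_iff.2 h])
    · simp only [ha, hb, if_false]
      exact f.mem_iff_mem

variable {f : α ≃. α} {s : Set α} [DecidablePred (· ∈ s)] {hdom : ∀ a ∈ s, f a = none}
  {hran : ∀ a ∈ s, f.symm a = none}

theorem extendRefl_apply_of_notMem {a : α} (ha : a ∉ s) : extendRefl f s hdom hran a = f a :=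
  if_neg ha

theorem le_extendRefl : f ≤ extendRefl f s hdom hran := by
  intro a b hb
  have ha : a ∉ s := fun ha => by simp [hdom a ha] at hb
  rwa [extendRefl_apply_of_notMem ha]

theorem setOf_isSome_extendRefl :
    {a | (extendRefl f s hdom hran a).isSome} = s ∪ {a | (f a).isSome} := by
  ext a
  by_cases ha : a ∈ s <;> simp [extendRefl, ha]

end PEquiv

namespace ISemi

theorem DFeeblyCompact.finite_of_isOpen_singleton {X : Type*} [TopologicalSpace X]
    (hX : DFeeblyCompact X) {S : Set X} (hopen : ∀ s ∈ S, IsOpen {s})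
    (hdisc : ∀ x, ∃ V ∈ 𝓝 x, (V ∩ S).Subsingleton) : S.Finite := by
  refine Set.Finite.of_finite_image (hX _ ?_ fun x => ?_) Set.singleton_injective.injOn
  · rintro _ ⟨s, hs, rfl⟩
    exact hopen s hs
  · obtain ⟨V, hV, hVS⟩ := hdisc x
    refine ⟨V, hV, ?_⟩
    rintro _ ⟨⟨s, hs, rfl⟩, y, rfl, hy⟩ _ ⟨⟨t, ht, rfl⟩, z, rfl, hz⟩
    exact congrArg _ (hVS ⟨hy, hs⟩ ⟨hz, ht⟩)

variable {ι : Type*} {n : ℕ}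

theorem dom_finite (f : Elem ι n) : (dom f).Finite :=
  Set.encard_lt_top_iff.1 (f.2.trans_lt (ENat.natCast_lt_top n))

theorem ran_finite (f : Elem ι n) : (ran f).Finite :=
  Set.encard_lt_top_iff.1 ((inv f).2.trans_lt (ENat.natCast_lt_top n))

theorem mem_dom_of_mem {f : Elem ι n} {a b : ι} (h : b ∈ f.1 a) : a ∈ dom f :=
  Option.isSome_iff_exists.2 ⟨b, h⟩

theorem mem_ran_of_mem {f : Elem ι n} {a b : ι} (h : b ∈ f.1 a) : b ∈ ran f :=
  Option.isSome_iff_exists.2 ⟨a, f.1.eq_some_iff.2 h⟩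

theorem dom_subset_of_le {f g : Elem ι n} (h : f.1 ≤ g.1) : dom f ⊆ dom g := fun a ha => by
  obtain ⟨b, hb⟩ := Option.isSome_iff_exists.1 ha
  exact mem_dom_of_mem (h a b hb)

theorem mem_of_le_of_mem_dom {f g : Elem ι n} (hfg : f.1 ≤ g.1) {a b : ι} (ha : a ∈ dom f)
    (hb : b ∈ g.1 a) : b ∈ f.1 a := by
  obtain ⟨c, hc⟩ := Option.isSome_iff_exists.1 ha
  rwa [Option.mem_unique hb (hfg a c hc)]

theorem eq_of_le_of_rank_eq {f g : Elem ι n} (hfg : f.1 ≤ g.1) (hf : rank f = n) : f = g := by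
  have hdom : dom f = dom g :=
    (dom_finite f).eq_of_subset_of_encard_le (dom_subset_of_le hfg) (g.2.trans hf.ge)
  exact Subtype.ext (le_antisymm hfg fun a b hb =>
    mem_of_le_of_mem_dom hfg (hdom ▸ mem_dom_of_mem hb) hb)

/-- The restriction of `x` to `dom f` and `ran f`: `f * inv f` and `inv f * f` are the
identities of these sets. -/
def restrict (f x : Elem ι n) : Elem ι n := f * inv f * x * (inv f * f)

theorem mem_restrict_apply {f x : Elem ι n} {a b : ι} :
    b ∈ (restrict f x).1 a ↔ b ∈ x.1 a ∧ a ∈ dom f ∧ b ∈ ran f := by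
  classical
  change b ∈ ((f.1.trans f.1.symm).trans x.1).trans (f.1.symm.trans f.1) a ↔ _
  rw [PEquiv.self_trans_symm, PEquiv.symm_trans_self]
  simp only [PEquiv.mem_trans, PEquiv.mem_ofSet_iff]
  constructor
  · rintro ⟨c, ⟨a', ⟨rfl, ha⟩, hc⟩, rfl, hb⟩
    exact ⟨hc, ha, hb⟩
  · rintro ⟨hb, ha, hb'⟩
    exact ⟨b, ⟨a, ⟨rfl, ha⟩, hb⟩, rfl, hb'⟩

theorem restrict_le (f x : Elem ι n) : (restrict f x).1 ≤ x.1 :=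
  fun _ _ h => (mem_restrict_apply.1 h).1

theorem restrict_eq_of_le {f g : Elem ι n} (h : f.1 ≤ g.1) : restrict f g = f :=
  Subtype.ext <| le_antisymm
    (fun _ _ hb => mem_of_le_of_mem_dom h (mem_restrict_apply.1 hb).2.1 (mem_restrict_apply.1 hb).1)
    fun _ _ hb => mem_restrict_apply.2 ⟨h _ _ hb, mem_dom_of_mem hb, mem_ran_of_mem hb⟩

theorem restrict_eq_self_of_le {f x : Elem ι n} (h : x.1 ≤ f.1) : restrict f x = x :=
  Subtype.ext <| le_antisymm (restrict_le f x) fun a b hb =>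
    mem_restrict_apply.2 ⟨hb, mem_dom_of_mem (h a b hb), mem_ran_of_mem (h a b hb)⟩

theorem finite_range_restrict (f : Elem ι n) : (Set.range (restrict f)).Finite := by
  refine ((PEquiv.finite_setOf_forall_mem_imp (dom_finite f) (ran_finite f)).preimage
    Subtype.val_injective.injOn).subset ?_
  rintro _ ⟨x, rfl⟩ a b hb
  exact (mem_restrict_apply.1 hb).2

theorem exists_seq_rank_eq_extensions [Infinite ι] {f : Elem ι n} (hf : rank f < n) :
    ∃ H : ℕ → Elem ι n, Injective H ∧ (∀ k, f.1 ≤ (H k).1 ∧ rank (H k) = n) ∧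
      ∀ k j, k ≠ j → ∀ x : Elem ι n, x.1 ≤ (H k).1 → x.1 ≤ (H j).1 → x.1 ≤ f.1 := by
  classical
  obtain ⟨m, hm⟩ := ENat.ne_top_iff_exists.1 (hf.trans (ENat.natCast_lt_top n)).ne
  have hmn : m < n := by exact_mod_cast hm ▸ hf
  obtain ⟨B, hBdisj, hB⟩ := ((dom_finite f).union (ran_finite f)).infinite_compl
    |>.exists_pairwise_disjoint_encard_eq (n - m)
  have hdom k a (ha : a ∈ B k) : f.1 a = none :=
    Option.not_isSome_iff_eq_none.1 fun h => (hB k).1 ha (Or.inl h)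
  have hran k a (ha : a ∈ B k) : f.1.symm a = none :=
    Option.not_isSome_iff_eq_none.1 fun h => (hB k).1 ha (Or.inr h)
  have hrank k : {a | (f.1.extendRefl (B k) (hdom k) (hran k) a).isSome}.encard = n := by
    have hdisj : Disjoint (B k) (dom f) :=
      Set.disjoint_left.2 fun a ha h => (hB k).1 ha (Or.inl h)
    rw [PEquiv.setOf_isSome_extendRefl]
    change (B k ∪ dom f).encard = n
    rw [Set.encard_union_eq hdisj, (hB k).2]
    change _ + rank f = _
    rw [← hm]
    exact_mod_cast Nat.sub_add_cancel hmn.le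
  let H k : Elem ι n := ⟨f.1.extendRefl (B k) (hdom k) (hran k), (hrank k).le⟩
  have hmeet k j (hkj : k ≠ j) (x : Elem ι n) (hk : x.1 ≤ (H k).1) (hj : x.1 ≤ (H j).1) :
      x.1 ≤ f.1 := by
    intro a b hb
    by_cases ha : a ∈ B k
    · have ha' : a ∉ B j := Set.disjoint_left.1 (hBdisj hkj) ha
      simpa [H, PEquiv.extendRefl_apply_of_notMem ha'] using hj a b hb
    · simpa [H, PEquiv.extendRefl_apply_of_notMem ha] using hk a b hb
  have hfH k : f.1 ≤ (H k).1 := PEquiv.le_extendRefl (hdom := hdom k) (hran := hran k)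
  refine ⟨H, fun k j hkj => ?_, fun k => ⟨hfH k, hrank k⟩, hmeet⟩
  by_contra hne
  have hHf : (H k).1 ≤ f.1 := hmeet k j hne (H k) le_rfl (hkj ▸ le_rfl)
  exact (hrank k ▸ hf.trans_le' (Set.encard_mono (dom_subset_of_le hHf))).false

section Topology

variable [TopologicalSpace (Elem ι n)] (hshift : ShiftContinuous ι n)
include hshift

theorem continuous_restrict (f : Elem ι n) : Continuous (restrict f) :=
  (hshift (inv f * f)).2.comp (hshift (f * inv f)).1

variable [T1Space (Elem ι n)]

theorem setOf_le_mem_nhds (f : Elem ι n) : {g : Elem ι n | f.1 ≤ g.1} ∈ 𝓝 f := by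
  have hopen : IsOpen (restrict f ⁻¹' {f}) :=
    (continuous_restrict hshift f).isOpen_preimage_singleton_of_finite_range
      (finite_range_restrict f) f
  refine Filter.mem_of_superset (hopen.mem_nhds (restrict_eq_of_le le_rfl)) fun g hg => ?_
  exact (congrArg Subtype.val hg).ge.trans (restrict_le f g)

theorem isOpen_singleton_of_rank_eq {f : Elem ι n} (hf : rank f = n) : IsOpen {f} :=
  isOpen_iff_mem_nhds.2 fun g hg => by
    rw [Set.mem_singleton_iff.1 hg]
    exact Filter.mem_of_superset (setOf_le_mem_nhds hshift f) fun _ hfg =>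
      (eq_of_le_of_rank_eq hfg hf).symm

theorem exists_mem_nhds_subsingleton_inter_range {U : Set (Elem ι n)} (hU : IsOpen U)
    {f : Elem ι n} (hfU : f ∈ U) {H : ℕ → Elem ι n} (hHU : ∀ k, H k ∉ U)
    (hfH : ∀ k, f.1 ≤ (H k).1)
    (hmeet : ∀ k j, k ≠ j → ∀ x : Elem ι n, x.1 ≤ (H k).1 → x.1 ≤ (H j).1 → x.1 ≤ f.1)
    (x : Elem ι n) : ∃ V ∈ 𝓝 x, (V ∩ Set.range H).Subsingleton := by
  by_cases hxf : x.1 ≤ f.1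
  · have hopen : IsOpen (U ∪ restrict f ⁻¹' {f}ᶜ) :=
      hU.union (isOpen_compl_singleton.preimage (continuous_restrict hshift f))
    refine ⟨_, hopen.mem_nhds ?_, ?_⟩
    · by_cases hx : x = f
      · exact .inl (hx ▸ hfU)
      · exact .inr (by simpa [restrict_eq_self_of_le hxf] using hx)
    · rintro _ ⟨hU' | hr, k, rfl⟩
      · exact absurd hU' (hHU k)
      · exact absurd (restrict_eq_of_le (hfH k)) hr
  · refine ⟨_, setOf_le_mem_nhds hshift x, ?_⟩
    rintro _ ⟨hk, k, rfl⟩ _ ⟨hj, j, rfl⟩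
    by_contra hne
    exact hxf (hmeet k j (fun h => hne (h ▸ rfl)) x hk hj)

end Topology

end ISemi

theorem stmt15_general (ι : Type*) [Infinite ι] (n : ℕ)
    [TopologicalSpace (ISemi.Elem ι n)] [T1Space (ISemi.Elem ι n)]
    (hshift : ISemi.ShiftContinuous ι n)
    (hd : ISemi.DFeeblyCompact (ISemi.Elem ι n)) :
    Dense {f : ISemi.Elem ι n | ISemi.rank f = (n : ℕ∞)} := by
  refine dense_iff_inter_open.2 fun U hU ⟨f, hfU⟩ => ?_
  by_contra hUfull
  have hfull g (hg : g ∈ U) : ISemi.rank g ≠ n := fun h => hUfull ⟨g, hg, h⟩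
  obtain ⟨H, hHinj, hH, hmeet⟩ :=
    ISemi.exists_seq_rank_eq_extensions (lt_of_le_of_ne f.2 (hfull f hfU))
  refine Set.infinite_range_of_injective hHinj (hd.finite_of_isOpen_singleton ?_ ?_)
  · rintro _ ⟨k, rfl⟩
    exact ISemi.isOpen_singleton_of_rank_eq hshift (hH k).2
  · exact ISemi.exists_mem_nhds_subsingleton_inter_range hshift hU hfU
      (fun k hk => hfull _ hk (hH k).2) (fun k => (hH k).1) hmeet

theorem stmt15 (ι : Type*) [Infinite ι] (n : ℕ) (hn : 0 < n)
    [TopologicalSpace (ISemi.Elem ι n)] [T1Space (ISemi.Elem ι n)]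
    (hshift : ISemi.ShiftContinuous ι n)
    (hd : ISemi.DFeeblyCompact (ISemi.Elem ι n)) :
    Dense {f : ISemi.Elem ι n | ISemi.rank f = (n : ℕ∞)} :=
  stmt15_general ι n hshift hd
end

section
/- Let n be a positive integer and λ an infinite cardinal. Every shift-continuous semiregular feebly compact T₁ topology τ on I_λ^n is compact. -/
open Set Topology

universe v

/-!
Shift-continuity makes every set `{x | x a = b}` clopen, being the preimage of the point
`e_{ab}` (and of the complement of `0`) under `x ↦ e_{aa} x e_{bb}`. Hence all up-sets `↑x` of
the natural order are clopen and the points of maximal rank in an open set are isolated.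

By feeble compactness, an infinite family of isolated points whose pairwise meets all equal `g`
accumulates at `g`. If `U ∋ g` is regular open and infinitely many elements above `g` outside `U`
meet pairwise in `g`, then, avoiding finitely many pairs at each step, one builds such a family
of isolated points outside `closure U`, which cannot accumulate at `g ∈ U`. With the Δ-system
lemma this shows that `↑g \ U` has finitely many minimal elements, so `↑g ∩ U` contains `↑g`
minus finitely many up-sets `↑x` with `x > g`. An ultrafilter then converges to the maximal `g`
with `↑g` in it.
-/

theorem Set.Infinite.exists_infinite_pairwiseDisjoint {α β : Type*} {I : Set α}
    (hI : I.Infinite) {A : α → Set β} (hA : ∀ i ∈ I, (A i).Finite)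
    (hAI : ∀ b, {i ∈ I | b ∈ A i}.Finite) :
    ∃ J ⊆ I, J.Infinite ∧ J.PairwiseDisjoint A := by
  have hnew : ∀ s : Finset α, (∀ i ∈ s, i ∈ I) →
      ∃ j ∈ I, ∀ i ∈ s, i ≠ j ∧ Disjoint (A i) (A j) := fun s hs => by
    have hbad : (⋃ i ∈ s, ⋃ b ∈ A i, {j ∈ I | b ∈ A j}).Finite :=
      s.finite_toSet.biUnion fun i hi => (hA i (hs i hi)).biUnion fun b _ => hAI b
    obtain ⟨j, ⟨hjI, hjbad⟩, hjs⟩ := ((hI.sdiff hbad).sdiff s.finite_toSet).nonempty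
    refine ⟨j, hjI, fun i hi => ⟨fun hij => hjs (hij ▸ hi), disjoint_left.2 fun b hbi hbj =>
      hjbad (mem_biUnion hi (mem_biUnion hbi ⟨hjI, hbj⟩))⟩⟩
  have : Std.Symm fun i j => i ≠ j ∧ Disjoint (A i) (A j) :=
    ⟨fun _ _ h => ⟨h.1.symm, h.2.symm⟩⟩
  obtain ⟨f, hfI, hf⟩ := exists_seq_of_forall_finset_exists' (· ∈ I) _ hnew
  have hf_inj : f.Injective := fun k l hkl => by_contra fun hne => (hf hne).1 hkl
  exact ⟨range f, range_subset_iff.2 hfI, infinite_range_of_injective hf_inj,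
    hf.range_pairwise.imp fun _ _ h => h.2⟩

theorem Set.Infinite.exists_infinite_pairwise_inter_eq {α β : Type*} {I : Set α}
    (hI : I.Infinite) (A : α → Set β) {m : ℕ} (hA : ∀ i ∈ I, (A i).encard ≤ m) :
    ∃ J ⊆ I, J.Infinite ∧ ∃ R, J.Pairwise fun i j => A i ∩ A j = R := by
  induction m generalizing A I with
  | zero =>
    refine ⟨I, subset_rfl, hI, ∅, fun i hi j _ _ => ?_⟩
    have : A i = ∅ := by simpa using hA i hi
    simp [this]
  | succ m ih =>
    by_cases h : ∃ b, {i ∈ I | b ∈ A i}.Infinite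
    · obtain ⟨b, hb⟩ := h
      have hAb : ∀ i ∈ {i ∈ I | b ∈ A i}, (A i \ {b}).encard ≤ m := by
        rintro i ⟨hi, hbi⟩
        rw [encard_sdiff_singleton_of_mem hbi, tsub_le_iff_right]
        exact_mod_cast hA i hi
      obtain ⟨J, hJ, hJinf, R, hR⟩ := ih hb (fun i => A i \ {b}) hAb
      refine ⟨J, fun i hi => (hJ hi).1, hJinf, insert b R, fun i hi j hj hij => ?_⟩
      change A i ∩ A j = insert b R
      rw [← (hR hi hj hij : (A i \ {b}) ∩ (A j \ {b}) = R)]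
      ext c
      by_cases hc : c = b
      · simp [hc, (hJ hi).2, (hJ hj).2]
      · simp [hc]
    · push Not at h
      obtain ⟨J, hJ, hJinf, hdisj⟩ :=
        hI.exists_infinite_pairwiseDisjoint (fun i hi => finite_of_encard_le_coe (hA i hi)) h
      exact ⟨J, hJ, hJinf, ∅, hdisj.imp fun _ _ h => h.inter_eq⟩

namespace ISemi

theorem FeeblyCompact.exists_forall_nhds_infinite {X : Type*} [TopologicalSpace X]
    (hfc : FeeblyCompact X) {S : Set X} (hS : S.Infinite) (hiso : ∀ s ∈ S, IsOpen {s}) :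
    ∃ w, ∀ t ∈ 𝓝 w, (S ∩ t).Infinite := by
  have hsing : (singleton '' S : Set (Set X)).Infinite := hS.image singleton_injective.injOn
  have hopen : ∀ U ∈ (singleton '' S : Set (Set X)), IsOpen U ∧ U.Nonempty := by
    rintro _ ⟨s, hs, rfl⟩
    exact ⟨hiso s hs, singleton_nonempty s⟩
  have hnlf : ¬LocallyFinite fun U : (singleton '' S : Set (Set X)) => (U : Set X) :=
    fun hlf => hsing (hfc _ hopen hlf)
  simp only [LocallyFinite, not_forall, not_exists, not_and] at hnlf
  obtain ⟨w, hw⟩ := hnlf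
  refine ⟨w, fun t ht hfin => hw t ht ?_⟩
  refine ((hfin.image singleton).subset ?_).of_finite_image Subtype.val_injective.injOn
  rintro _ ⟨⟨_, s, hs, rfl⟩, ⟨y, hys, hy⟩, rfl⟩
  rw [mem_singleton_iff.1 hys] at hy
  exact ⟨s, ⟨hs, hy⟩, rfl⟩

variable {ι : Type*} {n : ℕ}

-- Extension of partial bijections: the natural partial order of the inverse semigroup.
instance : PartialOrder (Elem ι n) := Subtype.partialOrder _

open Classical in
noncomputable instance : SemilatticeInf (Elem ι n) :=
  Subtype.semilatticeInf fun x y hx _ => by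
    refine (encard_mono fun a ha => ?_).trans hx
    obtain ⟨b, hb⟩ := Option.isSome_iff_exists.1 ha
    exact Option.isSome_iff_exists.2 ⟨b, (inf_le_left : x ⊓ y ≤ x) a b hb⟩

instance : OrderBot (Elem ι n) := Subtype.orderBot (by simp)

def graph (x : Elem ι n) : Set (ι × ι) := {p | p.2 ∈ x.1 p.1}

theorem le_iff_graph_subset {x y : Elem ι n} : x ≤ y ↔ graph x ⊆ graph y :=
  ⟨fun h p => h p.1 p.2, fun h a b => @h (a, b)⟩

theorem graph_injective : Function.Injective (graph : Elem ι n → Set (ι × ι)) :=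
  fun _ _ h => le_antisymm (le_iff_graph_subset.2 h.le) (le_iff_graph_subset.2 h.ge)

theorem graph_inf (x y : Elem ι n) : graph (x ⊓ y) = graph x ∩ graph y := by
  refine subset_antisymm (subset_inter (le_iff_graph_subset.1 inf_le_left)
    (le_iff_graph_subset.1 inf_le_right)) fun p ⟨hx, hy⟩ => ?_
  have h : (x ⊓ y).1 p.1 = x.1 p.1 := if_pos (hx.trans hy.symm)
  exact h.trans hx

theorem encard_graph_le (x : Elem ι n) : (graph x).encard ≤ n := by
  have hfst : (graph x).InjOn Prod.fst := fun p hp q hq hpq =>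
    Prod.ext hpq (Option.some_injective _ (hp.symm.trans (hpq ▸ hq)))
  rw [← hfst.encard_image]
  refine (encard_mono ?_).trans x.2
  rintro _ ⟨p, hp, rfl⟩
  exact Option.isSome_iff_exists.2 ⟨p.2, hp⟩

theorem graph_finite (x : Elem ι n) : (graph x).Finite :=
  (encard_le_coe_iff_finite_ncard_le.1 (encard_graph_le x)).1

theorem ncard_graph_le (x : Elem ι n) : (graph x).ncard ≤ n :=
  (encard_le_coe_iff_finite_ncard_le.1 (encard_graph_le x)).2

theorem strictMono_ncard_graph : StrictMono fun x : Elem ι n => (graph x).ncard := fun x y h =>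
  ncard_lt_ncard (by
    rw [lt_iff_le_not_ge, le_iff_graph_subset, le_iff_graph_subset] at h
    exact ssubset_iff_subset_not_subset.2 h) (graph_finite y)

instance : WellFoundedLT (Elem ι n) := strictMono_ncard_graph.wellFoundedLT

instance : WellFoundedGT (Elem ι n) :=
  StrictAnti.wellFoundedGT (f := fun x : Elem ι n => n - (graph x).ncard) fun _ y h =>
    have hlt := strictMono_ncard_graph h
    Nat.sub_lt_sub_left (hlt.trans_le (ncard_graph_le y)) hlt

theorem exists_infinite_pairwise_inf_eq {S : Set (Elem ι n)} (hS : S.Infinite) :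
    ∃ J ⊆ S, J.Infinite ∧ ∃ K, J.Pairwise fun x y => x ⊓ y = K := by
  obtain ⟨J, hJS, hJ, R, hR⟩ :=
    hS.exists_infinite_pairwise_inter_eq graph fun x _ => encard_graph_le x
  obtain ⟨x, hx, y, hy, hxy⟩ := hJ.nontrivial
  refine ⟨J, hJS, hJ, x ⊓ y, fun u hu v hv huv => graph_injective ?_⟩
  simp only [graph_inf]
  exact (hR hu hv huv).trans (hR hx hy hxy).symm

theorem finite_setOf_not_disjoint_graph {S : Set (Elem ι n)} {g : Elem ι n}
    (hS : S.Pairwise fun x y => x ⊓ y = g) {J : Set (ι × ι)} (hJ : J.Finite)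
    (hJg : Disjoint J (graph g)) : {s ∈ S | ¬Disjoint (graph s) J}.Finite := by
  refine (hJ.biUnion fun p hp => (?_ : {s ∈ S | p ∈ graph s}.Subsingleton).finite).subset ?_
  · rintro s ⟨hs, hps⟩ s' ⟨hs', hps'⟩
    by_contra hne
    have : p ∈ graph (s ⊓ s') := by rw [graph_inf]; exact ⟨hps, hps'⟩
    rw [hS hs hs' hne] at this
    exact disjoint_left.1 hJg hp this
  · rintro s ⟨hs, hsJ⟩
    obtain ⟨p, hps, hpJ⟩ := not_disjoint_iff.1 hsJ
    exact mem_biUnion hpJ ⟨hs, hps⟩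

section Atom

variable [DecidableEq ι] (hn : 0 < n)

def atom (a b : ι) : Elem ι n :=
  ⟨PEquiv.single a b, by
    have hdom : ∀ c, (PEquiv.single a b c).isSome → c = a := fun c hc => by_contra fun h => by
      simp [PEquiv.single_apply_of_ne (Ne.symm h)] at hc
    refine (encard_le_one_iff.2 fun c d hc hd => ?_).trans (by exact_mod_cast hn)
    rw [hdom c hc, hdom d hd]⟩

include hn

theorem atom_ne_bot (a b : ι) : atom hn a b ≠ ⊥ := fun h => by
  have : (atom hn a b).1 a = some b := PEquiv.single_apply a b
  rw [h] at this
  exact Option.some_ne_none b this.symm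

theorem atom_mul_mul_atom_of_mem {x : Elem ι n} {a b : ι} (h : (a, b) ∈ graph x) :
    atom hn a a * x * atom hn b b = atom hn a b :=
  Subtype.ext <| by
    change ((PEquiv.single a a).trans x.1).trans (PEquiv.single b b) = PEquiv.single a b
    rw [PEquiv.single_trans_of_mem a h, PEquiv.single_trans_single]

theorem atom_mul_mul_atom_of_notMem {x : Elem ι n} {a b : ι} (h : (a, b) ∉ graph x) :
    atom hn a a * x * atom hn b b = ⊥ :=
  Subtype.ext <| by
    change ((PEquiv.single a a).trans x.1).trans (PEquiv.single b b) = ⊥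
    cases hx : x.1 a with
    | none => rw [PEquiv.single_trans_of_eq_none a hx, PEquiv.bot_trans]
    | some c =>
      rw [PEquiv.single_trans_of_mem a hx, PEquiv.single_trans_single_of_ne]
      rintro rfl
      exact h hx

end Atom

section Topology

variable [TopologicalSpace (Elem ι n)] [T1Space (Elem ι n)] (hn : 0 < n)
  (hshift : ShiftContinuous ι n)
include hn hshift

theorem isClopen_setOf_mem_graph (p : ι × ι) : IsClopen {x : Elem ι n | p ∈ graph x} := by
  classical
  obtain ⟨a, b⟩ := p
  set f := fun x : Elem ι n => atom hn a a * x * atom hn b b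
  have hf : Continuous f := (hshift _).2.comp (hshift _).1
  have hmem : ∀ x, (a, b) ∈ graph x ↔ f x = atom hn a b := fun x =>
    ⟨atom_mul_mul_atom_of_mem hn, fun h => by_contra fun hx =>
      atom_ne_bot hn a b (h.symm.trans (atom_mul_mul_atom_of_notMem hn hx))⟩
  have hmem' : ∀ x, (a, b) ∈ graph x ↔ f x ≠ ⊥ := fun x =>
    ⟨fun hx => (atom_mul_mul_atom_of_mem hn hx).trans_ne (atom_ne_bot hn a b),
      fun h => by_contra fun hx => h (atom_mul_mul_atom_of_notMem hn hx)⟩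
  exact ⟨(Set.ext hmem : _ = f ⁻¹' {atom hn a b}) ▸ isClosed_singleton.preimage hf,
    (Set.ext hmem' : _ = f ⁻¹' {⊥}ᶜ) ▸ isOpen_compl_singleton.preimage hf⟩

theorem isOpen_setOf_disjoint_graph {J : Set (ι × ι)} (hJ : J.Finite) :
    IsOpen {x : Elem ι n | Disjoint (graph x) J} := by
  have : {x : Elem ι n | Disjoint (graph x) J} = ⋂ p ∈ J, {x | p ∈ graph x}ᶜ := by
    ext
    simp [disjoint_right]
  rw [this]
  exact hJ.isOpen_biInter fun p _ => (isClopen_setOf_mem_graph hn hshift p).isClosed.isOpen_compl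

theorem isOpen_Ici (x : Elem ι n) : IsOpen (Ici x) := by
  have : Ici x = ⋂ p ∈ graph x, {y | p ∈ graph y} := by
    ext
    simp [le_iff_graph_subset, subset_def]
  rw [this]
  exact (graph_finite x).isOpen_biInter fun p _ => (isClopen_setOf_mem_graph hn hshift p).isOpen

theorem exists_isOpen_singleton {W : Set (Elem ι n)} (hW : IsOpen W) (hne : W.Nonempty) :
    ∃ w ∈ W, IsOpen {w} := by
  obtain ⟨w, hw⟩ := exists_maximal_of_wellFoundedGT (· ∈ W) hne
  have : {w} = Ici w ∩ W :=
    (subset_inter (singleton_subset_iff.2 le_rfl) (singleton_subset_iff.2 hw.prop)).antisymm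
      fun y ⟨hwy, hy⟩ => hw.eq_of_ge hy hwy
  exact ⟨w, hw.prop, this ▸ (isOpen_Ici hn hshift w).inter hW⟩

theorem eq_of_forall_nhds_infinite {S : Set (Elem ι n)} {g w : Elem ι n}
    (hS : S.Pairwise fun x y => x ⊓ y = g) (hw : ∀ t ∈ 𝓝 w, (S ∩ t).Infinite) :
    w = g := by
  have hpair : ∀ t ∈ 𝓝 w, ∃ s ∈ t, ∃ s' ∈ t, s ⊓ s' = g := fun t ht => by
    obtain ⟨s, ⟨hs, hst⟩, s', ⟨hs', hs't⟩, hne⟩ := (hw t ht).nontrivial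
    exact ⟨s, hst, s', hs't, hS hs hs' hne⟩
  apply le_antisymm
  · obtain ⟨s, hs, s', hs', rfl⟩ := hpair _ ((isOpen_Ici hn hshift w).mem_nhds self_mem_Ici)
    exact le_inf hs hs'
  · refine le_iff_graph_subset.2 fun p hp => by_contra fun hpw => ?_
    obtain ⟨s, hs, s', -, rfl⟩ := hpair _
      ((isClopen_setOf_mem_graph hn hshift p).isClosed.isOpen_compl.mem_nhds hpw)
    exact hs (le_iff_graph_subset.1 inf_le_left hp)

theorem exists_isOpen_singleton_inf_eq {U : Set (Elem ι n)} (hU : interior (closure U) = U)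
    {g : Elem ι n} {S : Set (Elem ι n)} (hSinf : S.Infinite) (hSU : ∀ s ∈ S, s ∉ U)
    (hS : S.Pairwise fun x y => x ⊓ y = g) {T : Set (Elem ι n)} (hT : T.Finite)
    (hgT : ∀ v ∈ T, g ≤ v) :
    ∃ w, (IsOpen {w} ∧ w ∉ closure U ∧ g ≤ w) ∧ ∀ v ∈ T, v ⊓ w = g := by
  set J := ⋃ v ∈ T, graph v \ graph g
  have hJ : J.Finite := hT.biUnion fun v _ => (graph_finite v).sdiff
  have hJg : Disjoint J (graph g) :=
    disjoint_left.2 fun p hp => (mem_iUnion₂.1 hp).elim fun _ ⟨_, h⟩ => h.2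
  obtain ⟨s, hs, hsJ⟩ :=
    (hSinf.sdiff (finite_setOf_not_disjoint_graph hS hJ hJg)).nonempty
  have hsJ : Disjoint (graph s) J := not_not.1 fun h => hsJ ⟨hs, h⟩
  have hgs : g ≤ s := by
    obtain ⟨s', hs', hne⟩ := hSinf.nontrivial.exists_ne s
    exact hS hs hs' hne.symm ▸ inf_le_left
  set Ω := Ici s ∩ {x | Disjoint (graph x) J}
  have hΩ : IsOpen Ω := (isOpen_Ici hn hshift s).inter (isOpen_setOf_disjoint_graph hn hshift hJ)
  have hΩU : (Ω \ closure U).Nonempty := by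
    rw [sdiff_nonempty]
    intro h
    exact hSU s hs (hU ▸ interior_maximal h hΩ ⟨self_mem_Ici, hsJ⟩)
  obtain ⟨w, ⟨⟨hsw, hwJ⟩, hwU⟩, hw⟩ :=
    exists_isOpen_singleton hn hshift (hΩ.sdiff isClosed_closure) hΩU
  have hgw := hgs.trans hsw
  refine ⟨w, ⟨hw, hwU, hgw⟩, fun v hv => le_antisymm ?_ (le_inf (hgT v hv) hgw)⟩
  refine le_iff_graph_subset.2 fun p hp => by_contra fun hpg => ?_
  rw [graph_inf] at hp
  exact disjoint_left.1 hwJ hp.2 (mem_biUnion hv ⟨hp.1, hpg⟩)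

theorem finite_of_pairwise_inf_eq (hfc : FeeblyCompact (Elem ι n)) {U : Set (Elem ι n)}
    (hU : interior (closure U) = U) {g : Elem ι n} (hg : g ∈ U) {S : Set (Elem ι n)}
    (hSU : ∀ s ∈ S, s ∉ U) (hS : S.Pairwise fun x y => x ⊓ y = g) : S.Finite := by
  refine not_infinite.1 fun (hSinf : S.Infinite) => ?_
  have : Std.Symm fun x y : Elem ι n => x ⊓ y = g := ⟨fun x y h => inf_comm y x ▸ h⟩
  obtain ⟨f, hf, hfg⟩ := exists_seq_of_forall_finset_exists'
    (fun w => IsOpen {w} ∧ w ∉ closure U ∧ g ≤ w) _ fun T hT =>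
      exists_isOpen_singleton_inf_eq hn hshift hU hSinf hSU hS T.finite_toSet
        fun v hv => (hT v hv).2.2
  have hf_inj : f.Injective := fun k l hkl => by_contra fun hne => by
    have hfl : f l = g := by simpa [Function.onFun, hkl] using hfg hne
    exact (hf l).2.1 (hfl ▸ subset_closure hg)
  obtain ⟨w, hw⟩ := hfc.exists_forall_nhds_infinite (infinite_range_of_injective hf_inj)
    (forall_mem_range.2 fun k => (hf k).1)
  obtain rfl := eq_of_forall_nhds_infinite hn hshift hfg.range_pairwise hw
  obtain ⟨_, ⟨k, rfl⟩, hk⟩ := (hw U ((hU ▸ isOpen_interior).mem_nhds hg)).nonempty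
  exact (hf k).2.1 (subset_closure hk)

theorem finite_setOf_minimal_notMem (hfc : FeeblyCompact (Elem ι n)) {U : Set (Elem ι n)}
    (hU : interior (closure U) = U) (g : Elem ι n) :
    {x | Minimal (fun y => g ≤ y ∧ y ∉ U) x}.Finite := by
  refine not_infinite.1 fun (hinf : {x | Minimal (fun y => g ≤ y ∧ y ∉ U) x}.Infinite) => ?_
  obtain ⟨J, hJ, hJinf, K, hK⟩ := exists_infinite_pairwise_inf_eq hinf
  have hJ : ∀ ⦃z⦄, z ∈ J → Minimal (fun y => g ≤ y ∧ y ∉ U) z := hJ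
  obtain ⟨x, hx, y, hy, hxy⟩ := hJinf.nontrivial
  obtain rfl : x ⊓ y = K := hK hx hy hxy
  have hKU : x ⊓ y ∈ U := by
    by_contra hKU
    have hgK : g ≤ x ⊓ y := le_inf (hJ hx).prop.1 (hJ hy).prop.1
    have hxK := (hJ hx).le_of_le ⟨hgK, hKU⟩ inf_le_left
    have hyK := (hJ hy).le_of_le ⟨hgK, hKU⟩ inf_le_right
    exact hxy (le_antisymm (hxK.trans inf_le_right) (hyK.trans inf_le_left))
  exact hJinf (finite_of_pairwise_inf_eq hn hshift hfc hU hKU (fun z hz => (hJ hz).prop.2) hK)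

end Topology

end ISemi

theorem stmt19_general (ι : Type*) (n : ℕ) (hn : 0 < n)
    [TopologicalSpace (ISemi.Elem ι n)] [T1Space (ISemi.Elem ι n)]
    (hshift : ISemi.ShiftContinuous ι n)
    (hsr : ISemi.Semiregular (ISemi.Elem ι n))
    (hfc : ISemi.FeeblyCompact (ISemi.Elem ι n)) :
    CompactSpace (ISemi.Elem ι n) := by
  obtain ⟨B, hB, hBreg⟩ := hsr
  refine ⟨isCompact_iff_ultrafilter_le_nhds.2 fun F _ => ?_⟩
  obtain ⟨ρ, hρF, hρmax⟩ := exists_maximal_of_wellFoundedGT (fun x => Ici x ∈ F)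
    ⟨⊥, by rw [Ici_bot]; exact Filter.univ_mem⟩
  refine ⟨ρ, mem_univ ρ, fun N hN => ?_⟩
  obtain ⟨U, hUB, hρU, hUN⟩ := hB.mem_nhds_iff.1 hN
  set M := {x | Minimal (fun y => ρ ≤ y ∧ y ∉ U) x}
  have hM : M.Finite := ISemi.finite_setOf_minimal_notMem hn hshift hfc (hBreg U hUB) ρ
  have hMF : ∀ x ∈ M, (Ici x)ᶜ ∈ F := by
    rintro x ⟨⟨hρx, hxU⟩, -⟩
    refine Ultrafilter.compl_mem_iff_notMem.2 fun hxF => hxU ?_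
    exact le_antisymm (hρmax hxF hρx) hρx ▸ hρU
  refine Filter.mem_of_superset (Filter.inter_mem hρF ((Filter.biInter_mem hM).2 hMF))
    fun y ⟨hρy, hy⟩ => hUN (by_contra fun hyU => ?_)
  obtain ⟨x, hxy, hx⟩ :=
    exists_minimal_le_of_wellFoundedLT (fun z => ρ ≤ z ∧ z ∉ U) y ⟨hρy, hyU⟩
  exact mem_iInter₂.1 hy x hx hxy

theorem stmt19 (ι : Type*) [Infinite ι] (n : ℕ) (hn : 0 < n)
    [TopologicalSpace (ISemi.Elem ι n)] [T1Space (ISemi.Elem ι n)]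
    (hshift : ISemi.ShiftContinuous ι n)
    (hsr : ISemi.Semiregular (ISemi.Elem ι n))
    (hfc : ISemi.FeeblyCompact (ISemi.Elem ι n)) :
    CompactSpace (ISemi.Elem ι n) :=
  stmt19_general ι n hn hshift hsr hfc
end
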